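/- arXiv:quant-ph/0206148 — 2 statements merged into one kernel-verified Lean document; each statement's English description precedes it below -/
import Mathlib

section
/- Let T be a quantum channel from B(H) to B(H₂) with Stinespring dilation given by an isometry U : H → H₁ ⊗ H₂ (so T(σ) = Tr_{H₁}(UσU†)), and let K = U(H) be the image subspace. Then the Holevo capacity satisfies C(T) = sup over states ρ supported on K of [S(Tr_{H₁} ρ) − E_f(ρ)], where S is von Neumann entropy and E_f is entanglement of formation with respect to the H₁:H₂ bipartition. -/
open scoped Matrix Kronecker ComplexOrder
open Matrix

noncomputable section

/-- Square complex matrices indexed by `d`. -/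
abbrev Mat (d : Type) [Fintype d] : Type := Matrix d d ℂ

/-- A density operator: positive semidefinite with unit trace. -/
def IsState {d : Type} [Fintype d] [DecidableEq d] (ρ : Mat d) : Prop :=
  ρ.PosSemidef ∧ ρ.trace = 1

/-- Von Neumann entropy `S(ρ) = -Tr ρ log ρ`, via eigenvalues (junk value 0
if `ρ` is not Hermitian). -/
def entropy {d : Type} [Fintype d] [DecidableEq d] (ρ : Mat d) : ℝ :=
  if h : ρ.IsHermitian then ∑ i, Real.negMulLog (h.eigenvalues i) else 0

/-- Partial trace over the first tensor factor. -/
def ptrace₁ {d₁ d₂ : Type} [Fintype d₁] [Fintype d₂] (ρ : Mat (d₁ × d₂)) : Mat d₂ :=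
  Matrix.of fun j j' => ∑ i, ρ (i, j) (i, j')

/-- Partial trace over the second tensor factor. -/
def ptrace₂ {d₁ d₂ : Type} [Fintype d₁] [Fintype d₂] (ρ : Mat (d₁ × d₂)) : Mat d₁ :=
  Matrix.of fun i i' => ∑ j, ρ (i, j) (i', j)

/-- The pure state (rank-one projector) `|v⟩⟨v|`. -/
def pureState {d : Type} [Fintype d] (v : d → ℂ) : Mat d :=
  Matrix.vecMulVec v (star v)

/-- `v` is a unit vector. -/
def UnitVec {d : Type} [Fintype d] (v : d → ℂ) : Prop :=
  ∑ i, ‖v i‖ ^ 2 = 1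

/-- Entropy of entanglement of a pure bipartite state. -/
def pureEnt {d₁ d₂ : Type} [Fintype d₁] [Fintype d₂] [DecidableEq d₁]
    (v : d₁ × d₂ → ℂ) : ℝ :=
  entropy (ptrace₂ (pureState v))

/-- Average entanglements of pure-state decompositions of `ρ`. -/
def efVals {d₁ d₂ : Type} [Fintype d₁] [Fintype d₂] [DecidableEq d₁]
    (ρ : Mat (d₁ × d₂)) : Set ℝ :=
  {x | ∃ (m : ℕ) (p : Fin m → ℝ) (v : Fin m → (d₁ × d₂ → ℂ)),
    (∀ i, 0 ≤ p i) ∧ (∀ i, UnitVec (v i)) ∧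
    ρ = ∑ i, (p i : ℂ) • pureState (v i) ∧
    x = ∑ i, p i * pureEnt (v i)}

/-- Entanglement of formation. -/
def Ef {d₁ d₂ : Type} [Fintype d₁] [Fintype d₂] [DecidableEq d₁]
    (ρ : Mat (d₁ × d₂)) : ℝ :=
  sInf (efVals ρ)

/-- Holevo quantities of pure-state input ensembles for the channel `T`. -/
def capVals {d d₂ : Type} [Fintype d] [Fintype d₂] [DecidableEq d₂]
    (T : Mat d → Mat d₂) : Set ℝ :=
  {x | ∃ (m : ℕ) (p : Fin m → ℝ) (v : Fin m → (d → ℂ)),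
    (∀ i, 0 ≤ p i) ∧ (∑ i, p i = 1) ∧ (∀ i, UnitVec (v i)) ∧
    x = entropy (∑ i, (p i : ℂ) • T (pureState (v i)))
        - ∑ i, p i * entropy (T (pureState (v i)))}

/-- Holevo capacity of the channel `T`. -/
def holevoCap {d d₂ : Type} [Fintype d] [Fintype d₂] [DecidableEq d₂]
    (T : Mat d → Mat d₂) : ℝ :=
  sSup (capVals T)



/-! ### Auxiliary lemmas -/

section Aux

open Polynomial in
lemma aux_eval_charpoly {n : Type} [Fintype n] [DecidableEq n] (A : Matrix n n ℂ) (x : ℂ) :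
    (Matrix.charpoly A).eval x = (x • (1 : Mat n) - A).det := by
  rw [Matrix.charpoly, ← Polynomial.coe_evalRingHom, RingHom.map_det]
  congr 1
  ext i j
  by_cases h : i = j
  · subst h
    simp [Matrix.charmatrix_apply_eq, Matrix.one_apply]
  · simp [Matrix.charmatrix_apply_ne _ _ _ h, Matrix.one_apply, h]

lemma aux_dot_self (v : α → ℂ) [Fintype α] :
    dotProduct (star v) v = ((∑ i, ‖v i‖ ^ 2 : ℝ) : ℂ) := by
  simp only [dotProduct, Pi.star_apply, RCLike.star_def, Complex.ofReal_sum]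
  refine Finset.sum_congr rfl fun i _ => ?_
  rw [mul_comm, Complex.mul_conj, Complex.normSq_eq_norm_sq]

lemma pureState_apply {d : Type} [Fintype d] (v : d → ℂ) (i j : d) :
    pureState v i j = v i * star (v j) := rfl

lemma trace_pureState {d : Type} [Fintype d] [DecidableEq d] (v : d → ℂ) :
    (pureState v).trace = ((∑ i, ‖v i‖ ^ 2 : ℝ) : ℂ) := by
  rw [← aux_dot_self]
  simp only [Matrix.trace, Matrix.diag, pureState_apply, dotProduct, Pi.star_apply]
  exact Finset.sum_congr rfl fun i _ => mul_comm _ _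

lemma posSemidef_pureState {d : Type} [Fintype d] [DecidableEq d] (v : d → ℂ) :
    (pureState v).PosSemidef := by
  have : pureState v = Matrix.replicateCol Unit v * (Matrix.replicateCol Unit v)ᴴ := by
    ext i j
    simp [pureState_apply, Matrix.mul_apply, Matrix.replicateCol, Matrix.conjTranspose_apply]
  rw [this]
  exact Matrix.posSemidef_self_mul_conjTranspose _

end Aux

section Aux2
variable {d d' d₁ d₂ : Type} [Fintype d] [Fintype d'] [Fintype d₁] [Fintype d₂]
  [DecidableEq d] [DecidableEq d'] [DecidableEq d₁] [DecidableEq d₂]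

lemma ptrace₁_apply (ρ : Mat (d₁ × d₂)) (j j' : d₂) :
    ptrace₁ ρ j j' = ∑ i, ρ (i, j) (i, j') := rfl

lemma ptrace₁_smul (c : ℂ) (ρ : Mat (d₁ × d₂)) : ptrace₁ (c • ρ) = c • ptrace₁ ρ := by
  ext j j'
  simp [ptrace₁, Finset.mul_sum]

lemma ptrace₁_sum {m : ℕ} (f : Fin m → Mat (d₁ × d₂)) :
    ptrace₁ (∑ i, f i) = ∑ i, ptrace₁ (f i) := by
  ext j j'
  simp [ptrace₁, Matrix.sum_apply]
  rw [Finset.sum_comm]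

lemma trace_ptrace₁ (ρ : Mat (d₁ × d₂)) : (ptrace₁ ρ).trace = ρ.trace := by
  simp only [Matrix.trace, Matrix.diag, ptrace₁_apply, Fintype.sum_prod_type]
  rw [Finset.sum_comm]

lemma posSemidef_ptrace₁ {ρ : Mat (d₁ × d₂)} (hρ : ρ.PosSemidef) : (ptrace₁ ρ).PosSemidef := by
  rw [Matrix.posSemidef_iff_dotProduct_mulVec]
  constructor
  · ext j j'
    simp only [Matrix.conjTranspose_apply, ptrace₁_apply, star_sum]
    refine Finset.sum_congr rfl fun i _ => ?_
    conv_rhs => rw [← hρ.1]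
    simp [Matrix.conjTranspose_apply]
  · intro x
    have hA : dotProduct (star x) ((ptrace₁ ρ) *ᵥ x)
        = ∑ i : d₁, ∑ j, ∑ j', star (x j) * (ρ (i,j) (i,j') * x j') := by
      simp only [dotProduct, Matrix.mulVec, Pi.star_apply, ptrace₁, Matrix.of_apply,
        Finset.sum_mul, Finset.mul_sum, mul_assoc]
      exact (Finset.sum_congr rfl fun j _ => Finset.sum_comm).trans Finset.sum_comm
    have hB : ∀ i : d₁, dotProduct (star (fun p : d₁ × d₂ => if p.1 = i then x p.2 else 0))
        (ρ *ᵥ (fun p : d₁ × d₂ => if p.1 = i then x p.2 else 0))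
        = ∑ j, ∑ j', star (x j) * (ρ (i,j) (i,j') * x j') := by
      intro i
      simp only [dotProduct, Matrix.mulVec, Pi.star_apply, Fintype.sum_prod_type]
      simp [apply_ite, ite_mul, mul_ite, Finset.mul_sum, Finset.sum_mul, mul_assoc]
    rw [hA]
    refine Finset.sum_nonneg fun i _ => ?_
    rw [← hB i]
    exact hρ.dotProduct_mulVec_nonneg _

lemma ptrace₂_apply (ρ : Mat (d₁ × d₂)) (i i' : d₁) :
    ptrace₂ ρ i i' = ∑ j, ρ (i, j) (i', j) := rfl

/-- Conjugating a pure state by a matrix. -/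
lemma mul_pureState_mul (A : Matrix d' d ℂ) (v : d → ℂ) :
    A * pureState v * Aᴴ = pureState (A *ᵥ v) := by
  ext i j
  simp only [Matrix.mul_apply, pureState_apply, Matrix.conjTranspose_apply, Matrix.mulVec,
    dotProduct, star_sum, Finset.sum_mul, Finset.mul_sum, star_mul']
  refine Finset.sum_congr rfl fun k _ => Finset.sum_congr rfl fun l _ => ?_
  ring

lemma unitVec_iff (v : d → ℂ) : UnitVec v ↔ dotProduct (star v) v = 1 := by
  rw [aux_dot_self]
  unfold UnitVec
  constructor
  · intro h; rw [h]; norm_num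
  · intro h; exact_mod_cast h

lemma unitVec_mulVec {U : Matrix d' d ℂ} (hU : Uᴴ * U = 1) {v : d → ℂ} (hv : UnitVec v) :
    UnitVec (U *ᵥ v) := by
  rw [unitVec_iff] at hv ⊢
  rw [Matrix.star_mulVec, ← Matrix.dotProduct_mulVec, Matrix.mulVec_mulVec, hU,
    Matrix.one_mulVec]
  exact hv

end Aux2

section Aux3
open Polynomial

lemma entropy_of_hermitian {n : Type} [Fintype n] [DecidableEq n] {ρ : Mat n}
    (h : ρ.IsHermitian) : entropy ρ = ∑ i, Real.negMulLog (h.eigenvalues i) := dif_pos h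

lemma aux_smul_one_eq_diagonal {n : Type} [Fintype n] [DecidableEq n] (x : ℂ) :
    x • (1 : Mat n) = Matrix.diagonal (fun _ => x) := by
  ext i j
  by_cases h : i = j <;> simp [h, Matrix.one_apply, Matrix.diagonal]

lemma aux_charpoly_hermitian {n : Type} [Fintype n] [DecidableEq n] {A : Mat n}
    (hA : A.IsHermitian) :
    A.charpoly = ∏ i, (X - C ((hA.eigenvalues i : ℂ))) := by
  apply Polynomial.funext
  intro x
  rw [aux_eval_charpoly]
  set V : Mat n := (hA.eigenvectorUnitary : Mat n) with hV
  set D : Mat n := Matrix.diagonal (RCLike.ofReal ∘ hA.eigenvalues) with hD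
  have hVV : V * star V = 1 := (Matrix.mem_unitaryGroup_iff).mp hA.eigenvectorUnitary.2
  have key : x • (1 : Mat n) - A = V * (x • (1 : Mat n) - D) * star V := by
    conv_lhs => rw [hA.spectral_theorem]
    rw [Matrix.mul_sub, Matrix.sub_mul]
    congr 1
    rw [Matrix.mul_smul, mul_one, Matrix.smul_mul, hVV]
  rw [key, Matrix.det_mul, Matrix.det_mul]
  have hdet : (x • (1 : Mat n) - D).det = ∏ i, (x - (hA.eigenvalues i : ℂ)) := by
    rw [aux_smul_one_eq_diagonal, hD, Matrix.diagonal_sub, Matrix.det_diagonal]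
    simp [Function.comp, RCLike.ofReal]
  have hdetV : V.det * (star V).det = 1 := by
    rw [← Matrix.det_mul, hVV, Matrix.det_one]
  rw [mul_comm V.det, mul_assoc, hdetV, mul_one, hdet]
  simp [eval_prod]

lemma aux_roots_charpoly {n : Type} [Fintype n] [DecidableEq n] {A : Mat n}
    (hA : A.IsHermitian) :
    A.charpoly.roots
      = Multiset.map (fun i => ((hA.eigenvalues i : ℝ) : ℂ)) Finset.univ.val := by
  rw [aux_charpoly_hermitian hA]
  rw [show (∏ i, (X - C ((hA.eigenvalues i : ℂ))))
      = ((Multiset.map (fun i => ((hA.eigenvalues i : ℝ) : ℂ)) Finset.univ.val).map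
          (fun a => X - C a)).prod by
    rw [Multiset.map_map]; rfl]
  exact roots_multiset_prod_X_sub_C _

lemma aux_charpoly_transpose {n : Type} [Fintype n] [DecidableEq n] (A : Mat n) :
    Aᵀ.charpoly = A.charpoly := by
  apply Polynomial.funext
  intro x
  rw [aux_eval_charpoly, aux_eval_charpoly, ← Matrix.det_transpose (x • (1 : Mat n) - A),
    Matrix.transpose_sub, Matrix.transpose_smul, Matrix.transpose_one]

lemma aux_charpoly_mul_comm {d₁ d₂ : Type} [Fintype d₁] [Fintype d₂] [DecidableEq d₁]
    [DecidableEq d₂] (M : Matrix d₁ d₂ ℂ) :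
    (M * Mᴴ).charpoly * X ^ (Fintype.card d₂) = (Mᴴ * M).charpoly * X ^ (Fintype.card d₁) := by
  apply Polynomial.eq_of_infinite_eval_eq
  refine Set.Infinite.mono ?_ (Set.Finite.infinite_compl (Set.finite_singleton (0 : ℂ)))
  intro x hx
  have hx' : x ≠ 0 := hx
  simp only [Set.mem_setOf_eq, eval_mul, eval_pow, eval_X, aux_eval_charpoly]
  have e1 : x • (1 : Mat d₁) - M * Mᴴ = x • ((1 : Mat d₁) - (x⁻¹ • M) * Mᴴ) := by
    rw [smul_sub]
    congr 1
    rw [Matrix.smul_mul, smul_smul, mul_inv_cancel₀ hx', one_smul]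
  have e2 : x • (1 : Mat d₂) - Mᴴ * M = x • ((1 : Mat d₂) - Mᴴ * (x⁻¹ • M)) := by
    rw [smul_sub]
    congr 1
    rw [Matrix.mul_smul, smul_smul, mul_inv_cancel₀ hx', one_smul]
  rw [e1, e2, Matrix.det_smul, Matrix.det_smul, Matrix.det_one_sub_mul_comm]
  ring

lemma aux_sum_negMulLog_eq {nA nB : Type} [Fintype nA] [Fintype nB] [DecidableEq nA]
    [DecidableEq nB] {A : Mat nA} {B : Mat nB} (hA : A.IsHermitian) (hB : B.IsHermitian)
    (h : A.charpoly * X ^ (Fintype.card nB) = B.charpoly * X ^ (Fintype.card nA)) :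
    ∑ i, Real.negMulLog (hA.eigenvalues i) = ∑ j, Real.negMulLog (hB.eigenvalues j) := by
  have hroots := congrArg Polynomial.roots h
  rw [Polynomial.roots_mul (mul_ne_zero (Matrix.charpoly_monic A).ne_zero
        (pow_ne_zero _ Polynomial.X_ne_zero)),
      Polynomial.roots_mul (mul_ne_zero (Matrix.charpoly_monic B).ne_zero
        (pow_ne_zero _ Polynomial.X_ne_zero)),
      Polynomial.roots_pow, Polynomial.roots_pow, Polynomial.roots_X,
      aux_roots_charpoly hA, aux_roots_charpoly hB] at hroots
  have hsum := congrArg (fun m : Multiset ℂ =>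
    (m.map (fun z : ℂ => Real.negMulLog z.re)).sum) hroots
  simp only [Multiset.map_add, Multiset.sum_add, Multiset.map_nsmul, Multiset.map_singleton,
    Multiset.map_map, Multiset.sum_nsmul, Multiset.sum_singleton, Complex.zero_re,
    Real.negMulLog_zero, smul_zero, add_zero] at hsum
  have conv1 : (Multiset.map ((fun z : ℂ => Real.negMulLog z.re)
        ∘ fun i => ((hA.eigenvalues i : ℝ) : ℂ)) Finset.univ.val).sum
      = ∑ i, Real.negMulLog (hA.eigenvalues i) := by
    rw [show ((fun z : ℂ => Real.negMulLog z.re) ∘ fun i => ((hA.eigenvalues i : ℝ) : ℂ))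
        = fun i => Real.negMulLog (hA.eigenvalues i) from funext fun i => by simp]
    rfl
  have conv2 : (Multiset.map ((fun z : ℂ => Real.negMulLog z.re)
        ∘ fun i => ((hB.eigenvalues i : ℝ) : ℂ)) Finset.univ.val).sum
      = ∑ j, Real.negMulLog (hB.eigenvalues j) := by
    rw [show ((fun z : ℂ => Real.negMulLog z.re) ∘ fun i => ((hB.eigenvalues i : ℝ) : ℂ))
        = fun i => Real.negMulLog (hB.eigenvalues i) from funext fun i => by simp]
    rfl
  exact conv1.symm.trans (hsum.trans conv2)

end Aux3

section Aux4
variable {n d₁ d₂ : Type} [Fintype n] [DecidableEq n] [Fintype d₁] [Fintype d₂]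
  [DecidableEq d₁] [DecidableEq d₂]

lemma trace_ptrace₂ (ρ : Mat (d₁ × d₂)) : (ptrace₂ ρ).trace = ρ.trace := by
  simp only [Matrix.trace, Matrix.diag, ptrace₂_apply, Fintype.sum_prod_type]

lemma posSemidef_ptrace₂ {ρ : Mat (d₁ × d₂)} (hρ : ρ.PosSemidef) : (ptrace₂ ρ).PosSemidef := by
  rw [Matrix.posSemidef_iff_dotProduct_mulVec]
  constructor
  · ext i i'
    simp only [Matrix.conjTranspose_apply, ptrace₂_apply, star_sum]
    refine Finset.sum_congr rfl fun j _ => ?_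
    conv_rhs => rw [← hρ.1]
    simp [Matrix.conjTranspose_apply]
  · intro x
    have hA : dotProduct (star x) ((ptrace₂ ρ) *ᵥ x)
        = ∑ j : d₂, ∑ i, ∑ i', star (x i) * (ρ (i,j) (i',j) * x i') := by
      simp only [dotProduct, Matrix.mulVec, Pi.star_apply, ptrace₂, Matrix.of_apply,
        Finset.sum_mul, Finset.mul_sum, mul_assoc]
      exact (Finset.sum_congr rfl fun j _ => Finset.sum_comm).trans Finset.sum_comm
    have hB : ∀ j : d₂, dotProduct (star (fun p : d₁ × d₂ => if p.2 = j then x p.1 else 0))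
        (ρ *ᵥ (fun p : d₁ × d₂ => if p.2 = j then x p.1 else 0))
        = ∑ i, ∑ i', star (x i) * (ρ (i,j) (i',j) * x i') := by
      intro j
      simp only [dotProduct, Matrix.mulVec, Pi.star_apply, Fintype.sum_prod_type]
      simp [apply_ite, ite_mul, mul_ite, Finset.mul_sum, Finset.sum_mul, mul_assoc]
    rw [hA]
    refine Finset.sum_nonneg fun j _ => ?_
    rw [← hB j]
    exact hρ.dotProduct_mulVec_nonneg _

lemma aux_trace_eq_sum_eig {A : Mat n} (hA : A.IsHermitian) :
    A.trace = ∑ i, ((hA.eigenvalues i : ℝ) : ℂ) := by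
  conv_lhs => rw [hA.spectral_theorem, Unitary.conjStarAlgAut_apply]
  rw [Matrix.trace_mul_cycle, Unitary.coe_star_mul_self, one_mul, Matrix.trace_diagonal]
  simp [Function.comp, RCLike.ofReal]

lemma aux_sum_eig_eq_one {ρ : Mat n} (hρ : ρ.PosSemidef) (htr : ρ.trace = 1) :
    ∑ i, hρ.1.eigenvalues i = 1 := by
  have := (aux_trace_eq_sum_eig hρ.1).symm.trans htr
  exact_mod_cast this.symm.symm

lemma aux_eig_le_one {ρ : Mat n} (hρ : ρ.PosSemidef) (htr : ρ.trace = 1) (i : n) :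
    hρ.1.eigenvalues i ≤ 1 := by
  rw [← aux_sum_eig_eq_one hρ htr]
  exact Finset.single_le_sum (fun j _ => hρ.eigenvalues_nonneg j) (Finset.mem_univ i)

lemma entropy_nonneg {ρ : Mat n} (hρ : ρ.PosSemidef) (htr : ρ.trace = 1) :
    0 ≤ entropy ρ := by
  rw [entropy_of_hermitian hρ.1]
  exact Finset.sum_nonneg fun i _ =>
    Real.negMulLog_nonneg (hρ.eigenvalues_nonneg i) (aux_eig_le_one hρ htr i)

lemma aux_nonempty_of_trace_one {ρ : Mat n} (htr : ρ.trace = 1) : Nonempty n := by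
  by_contra h
  rw [not_nonempty_iff] at h
  rw [Matrix.trace] at htr
  simp [Finset.univ_eq_empty] at htr

lemma entropy_le_log {ρ : Mat n} (hρ : ρ.PosSemidef) (htr : ρ.trace = 1) :
    entropy ρ ≤ Real.log (Fintype.card n) := by
  have hne : Nonempty n := aux_nonempty_of_trace_one htr
  set c : ℝ := (Fintype.card n : ℝ) with hc
  have hcpos : (0 : ℝ) < c := by
    rw [hc]
    exact_mod_cast Fintype.card_pos
  have jensen := Real.concaveOn_negMulLog.le_map_sum (t := Finset.univ)
    (w := fun _ : n => 1 / c) (p := fun i => hρ.1.eigenvalues i)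
    (fun i _ => by positivity)
    (by rw [Finset.sum_const, Finset.card_univ, nsmul_eq_mul]; field_simp; exact hc.symm)
    (fun i _ => hρ.eigenvalues_nonneg i)
  have hsum : ∑ i, (1 / c) • hρ.1.eigenvalues i = 1 / c := by
    rw [← Finset.smul_sum, aux_sum_eig_eq_one hρ htr, smul_eq_mul, mul_one]
  rw [hsum] at jensen
  have hrhs : Real.negMulLog (1 / c) = (1 / c) * Real.log c := by
    rw [Real.negMulLog, one_div, Real.log_inv]
    ring
  rw [hrhs] at jensen
  have hlhs : ∑ i, (1 / c) • Real.negMulLog (hρ.1.eigenvalues i) = (1 / c) * entropy ρ := by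
    rw [entropy_of_hermitian hρ.1, ← Finset.smul_sum, smul_eq_mul]
  rw [hlhs] at jensen
  have := (mul_le_mul_iff_right₀ (by positivity : (0:ℝ) < 1 / c)).mp jensen
  exact this

lemma posSemidef_real_smul {c : ℝ} (hc : 0 ≤ c) {M : Mat n} (hM : M.PosSemidef) :
    ((c : ℂ) • M).PosSemidef := by
  rw [Matrix.posSemidef_iff_dotProduct_mulVec]
  constructor
  · rw [Matrix.IsHermitian, Matrix.conjTranspose_smul, hM.1]
    congr 1
    simp [Complex.conj_ofReal]
  · intro x
    rw [Matrix.smul_mulVec, dotProduct_smul, smul_eq_mul]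
    exact mul_nonneg (by exact_mod_cast hc) (hM.dotProduct_mulVec_nonneg x)

lemma isState_ensemble {m : ℕ} {p : Fin m → ℝ} {v : Fin m → (n → ℂ)}
    (hp : ∀ i, 0 ≤ p i) (hp1 : ∑ i, p i = 1) (hv : ∀ i, UnitVec (v i)) :
    IsState (∑ i, (p i : ℂ) • pureState (v i)) := by
  constructor
  · exact Finset.sum_induction _ (fun M : Mat n => M.PosSemidef)
      (fun a b ha hb => ha.add hb) Matrix.PosSemidef.zero
      (fun i _ => posSemidef_real_smul (hp i) (posSemidef_pureState (v i)))
  · rw [Matrix.trace_sum]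
    have : ∀ i : Fin m, ((p i : ℂ) • pureState (v i)).trace = (p i : ℂ) := by
      intro i
      rw [Matrix.trace_smul, trace_pureState, hv i]
      simp
    rw [Finset.sum_congr rfl fun i _ => this i]
    exact_mod_cast congrArg (Complex.ofReal) hp1

lemma aux_spectral_decomp {A : Mat n} (hA : A.PosSemidef) :
    ∃ (p : n → ℝ) (w : n → n → ℂ), (∀ k, 0 ≤ p k) ∧ (∀ k, UnitVec (w k)) ∧
      A = ∑ k, (p k : ℂ) • pureState (w k) ∧ A.trace = ∑ k, (p k : ℂ) := by
  set V : Mat n := (hA.1.eigenvectorUnitary : Mat n) with hV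
  refine ⟨hA.1.eigenvalues, fun k => fun i => V i k, fun k => hA.eigenvalues_nonneg k,
    ?_, ?_, ?_⟩
  · intro k
    have h1 : (star V * V) k k = 1 := by
      rw [Unitary.coe_star_mul_self]
      simp
    rw [Matrix.mul_apply] at h1
    have h2 : dotProduct (star fun i => V i k) (fun i => V i k) = 1 := by
      rw [← h1]
      refine Finset.sum_congr rfl fun i _ => ?_
      simp [Matrix.star_apply]
    exact (unitVec_iff _).mpr h2
  · conv_lhs => rw [hA.1.spectral_theorem, Unitary.conjStarAlgAut_apply]
    ext i j
    simp only [Matrix.mul_apply, Matrix.sum_apply, Matrix.smul_apply, Matrix.star_apply,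
      Matrix.diagonal_apply, Function.comp_apply, pureState_apply, ite_mul, zero_mul,
      Finset.sum_ite_eq, Finset.sum_ite_eq', Finset.mem_univ, if_true, smul_eq_mul, mul_ite, mul_zero]
    refine Finset.sum_congr rfl fun k _ => ?_
    simp only [hV, Matrix.IsHermitian.eigenvectorUnitary_apply]
    exact (mul_assoc _ _ _).trans (mul_left_comm _ _ _)
  · rw [aux_trace_eq_sum_eig hA.1]

lemma unitVec_single (i₀ : n) : UnitVec (Pi.single i₀ (1 : ℂ)) := by
  unfold UnitVec
  rw [Finset.sum_eq_single i₀] <;> simp +contextual [Pi.single_apply]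

lemma pureEnt_nonneg {v : d₁ × d₂ → ℂ} (hv : UnitVec v) : 0 ≤ pureEnt v := by
  refine entropy_nonneg (posSemidef_ptrace₂ (posSemidef_pureState v)) ?_
  rw [trace_ptrace₂, trace_pureState, hv]
  simp

end Aux4

section Aux5
variable {d d₁ d₂ : Type} [Fintype d] [Fintype d₁] [Fintype d₂]
  [DecidableEq d] [DecidableEq d₁] [DecidableEq d₂]

/-- Key fact: the two marginals of a pure bipartite state have equal entropy. -/
lemma pureEnt_eq_entropy_ptrace₁ (v : d₁ × d₂ → ℂ) :
    pureEnt v = entropy (ptrace₁ (pureState v)) := by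
  set M : Matrix d₁ d₂ ℂ := Matrix.of (fun i j => v (i, j)) with hM
  have h2 : ptrace₂ (pureState v) = M * Mᴴ := by
    ext i i'
    simp [ptrace₂_apply, pureState_apply, Matrix.mul_apply, Matrix.conjTranspose_apply, hM]
  have h1 : ptrace₁ (pureState v) = Mᵀ * Mᵀᴴ := by
    ext j j'
    simp [ptrace₁_apply, pureState_apply, Matrix.mul_apply, Matrix.conjTranspose_apply, hM]
  have hA : (M * Mᴴ).IsHermitian := Matrix.isHermitian_mul_conjTranspose_self M
  have hB : (Mᵀ * Mᵀᴴ).IsHermitian := Matrix.isHermitian_mul_conjTranspose_self Mᵀ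
  rw [pureEnt, h2, h1, entropy_of_hermitian hA, entropy_of_hermitian hB]
  have c2 := aux_charpoly_mul_comm Mᵀ
  have c3 : Mᵀᴴ * Mᵀ = (M * Mᴴ)ᵀ := by
    ext i i'
    simp only [Matrix.mul_apply, Matrix.conjTranspose_apply, Matrix.transpose_apply]
    exact Finset.sum_congr rfl fun j _ => mul_comm _ _
  have c4 : (Mᵀᴴ * Mᵀ).charpoly = (M * Mᴴ).charpoly := by
    rw [c3, aux_charpoly_transpose]
  refine aux_sum_negMulLog_eq hA hB ?_
  rw [← c4]
  exact c2.symm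

lemma isState_conj {σ : Mat d} (hσ : IsState σ) {U : Matrix (d₁ × d₂) d ℂ}
    (hU : Uᴴ * U = 1) : IsState (U * σ * Uᴴ) := by
  refine ⟨hσ.1.mul_mul_conjTranspose_same U, ?_⟩
  rw [Matrix.trace_mul_cycle, hU, Matrix.one_mul, hσ.2]

lemma efVals_nonneg {ρ : Mat (d₁ × d₂)} : ∀ x ∈ efVals ρ, 0 ≤ x := by
  rintro x ⟨m, p, v, hp, hv, _, rfl⟩
  exact Finset.sum_nonneg fun i _ => mul_nonneg (hp i) (pureEnt_nonneg (hv i))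

lemma Ef_nonneg (ρ : Mat (d₁ × d₂)) : 0 ≤ Ef ρ :=
  Real.sInf_nonneg efVals_nonneg

lemma aux_isometry {U : Matrix (d₁ × d₂) d ℂ} (hU : Uᴴ * U = 1) (u : d → ℂ) :
    dotProduct (star (U *ᵥ u)) (U *ᵥ u) = dotProduct (star u) u := by
  rw [Matrix.star_mulVec, ← Matrix.dotProduct_mulVec, Matrix.mulVec_mulVec, hU,
    Matrix.one_mulVec]

lemma unitVec_of_mulVec {U : Matrix (d₁ × d₂) d ℂ} (hU : Uᴴ * U = 1) {u : d → ℂ}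
    (h : UnitVec (U *ᵥ u)) : UnitVec u := by
  rw [unitVec_iff] at h ⊢
  rw [← aux_isometry hU u]
  exact h

/-- vectors in a decomposition of `U σ Uᴴ` with nonzero weight lie in the range of `U`. -/
lemma aux_support {σ : Mat d} {U : Matrix (d₁ × d₂) d ℂ} (hU : Uᴴ * U = 1)
    {m : ℕ} {p : Fin m → ℝ} {w : Fin m → (d₁ × d₂ → ℂ)} (hp : ∀ i, 0 ≤ p i)
    (hdec : U * σ * Uᴴ = ∑ i, (p i : ℂ) • pureState (w i))
    {i : Fin m} (hpi : p i ≠ 0) : U *ᵥ (Uᴴ *ᵥ w i) = w i := by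
  set Q : Mat (d₁ × d₂) := 1 - U * Uᴴ with hQdef
  have hQU : Q * U = 0 := by
    rw [hQdef, Matrix.sub_mul, Matrix.one_mul, Matrix.mul_assoc, hU, Matrix.mul_one, sub_self]
  have hUQ : Uᴴ * Q = 0 := by
    rw [hQdef, Matrix.mul_sub, Matrix.mul_one, ← Matrix.mul_assoc, hU, Matrix.one_mul, sub_self]
  have hQH : Qᴴ = Q := by
    rw [hQdef, Matrix.conjTranspose_sub, Matrix.conjTranspose_one, Matrix.conjTranspose_mul,
      Matrix.conjTranspose_conjTranspose]
  have hzero : Q * (U * σ * Uᴴ) * Qᴴ = 0 := by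
    rw [hQH, show Q * (U * σ * Uᴴ) * Q = (Q * U) * (σ * (Uᴴ * Q)) by
      simp only [Matrix.mul_assoc], hQU, Matrix.zero_mul]
  have hsum : (0 : ℂ) = ∑ j, (p j : ℂ) * ((∑ k, ‖(Q *ᵥ w j) k‖ ^ 2 : ℝ) : ℂ) := by
    have : Q * (U * σ * Uᴴ) * Qᴴ = ∑ j, (p j : ℂ) • pureState (Q *ᵥ w j) := by
      rw [hdec, Matrix.mul_sum, Matrix.sum_mul]
      refine Finset.sum_congr rfl fun j _ => ?_
      rw [Matrix.mul_smul, Matrix.smul_mul, mul_pureState_mul]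
    rw [this] at hzero
    have := congrArg Matrix.trace hzero.symm
    rw [Matrix.trace_sum] at this
    rw [show (0 : Mat (d₁ × d₂)).trace = 0 from Matrix.trace_zero _ _] at this
    rw [this]
    refine Finset.sum_congr rfl fun j _ => ?_
    rw [Matrix.trace_smul, trace_pureState, smul_eq_mul]
  have hreal : (0 : ℝ) = ∑ j, p j * (∑ k, ‖(Q *ᵥ w j) k‖ ^ 2 : ℝ) := by
    have h2 : ((∑ j, p j * (∑ k, ‖(Q *ᵥ w j) k‖ ^ 2 : ℝ) : ℝ) : ℂ) = 0 := by
      rw [show ((∑ j, p j * (∑ k, ‖(Q *ᵥ w j) k‖ ^ 2 : ℝ) : ℝ) : ℂ)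
          = ∑ j, (p j : ℂ) * ((∑ k, ‖(Q *ᵥ w j) k‖ ^ 2 : ℝ) : ℂ) by push_cast; rfl]
      exact hsum.symm
    exact_mod_cast h2.symm
  have hterm : p i * (∑ k, ‖(Q *ᵥ w i) k‖ ^ 2 : ℝ) = 0 := by
    have hnn : ∀ j ∈ Finset.univ, 0 ≤ p j * (∑ k, ‖(Q *ᵥ w j) k‖ ^ 2 : ℝ) :=
      fun j _ => mul_nonneg (hp j) (Finset.sum_nonneg fun k _ => by positivity)
    exact (Finset.sum_eq_zero_iff_of_nonneg hnn).mp hreal.symm i (Finset.mem_univ i)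
  have hsq : (∑ k, ‖(Q *ᵥ w i) k‖ ^ 2 : ℝ) = 0 := by
    rcases mul_eq_zero.mp hterm with h | h
    · exact absurd h hpi
    · exact h
  have hQw : Q *ᵥ w i = 0 := by
    funext k
    have := (Finset.sum_eq_zero_iff_of_nonneg (fun k _ => by positivity)).mp hsq k
      (Finset.mem_univ k)
    have hk : ‖(Q *ᵥ w i) k‖ = 0 := by
      have := this
      nlinarith [norm_nonneg ((Q *ᵥ w i) k)]
    simpa using norm_eq_zero.mp hk
  rw [Matrix.mulVec_mulVec]
  rw [hQdef, Matrix.sub_mulVec, Matrix.one_mulVec] at hQw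
  exact (sub_eq_zero.mp hQw).symm

end Aux5

theorem stmt0
    {d d₁ d₂ : Type} [Fintype d] [Fintype d₁] [Fintype d₂]
    [DecidableEq d] [DecidableEq d₁] [DecidableEq d₂]
    (U : Matrix (d₁ × d₂) d ℂ) (hU : Uᴴ * U = 1)
    (T : Mat d → Mat d₂) (hT : ∀ σ : Mat d, T σ = ptrace₁ (U * σ * Uᴴ)) :
    holevoCap T =
      sSup {x : ℝ | ∃ σ : Mat d, IsState σ ∧
        x = entropy (ptrace₁ (U * σ * Uᴴ)) - Ef (U * σ * Uᴴ)} := by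
  classical
  rcases isEmpty_or_nonempty d with hd | hd
  · haveI := hd
    have h1 : capVals T = ∅ := by
      ext x
      simp only [capVals, Set.mem_setOf_eq, Set.mem_empty_iff_false, iff_false, not_exists]
      rintro m p v ⟨hp, hp1, hv, hx⟩
      rcases Nat.eq_zero_or_pos m with hm | hm
      · subst hm
        simp at hp1
      · have h0 := hv ⟨0, hm⟩
        unfold UnitVec at h0
        simp [Finset.univ_eq_empty] at h0
    have h2 : {x : ℝ | ∃ σ : Mat d, IsState σ ∧
        x = entropy (ptrace₁ (U * σ * Uᴴ)) - Ef (U * σ * Uᴴ)} = ∅ := by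
      ext x
      simp only [Set.mem_setOf_eq, Set.mem_empty_iff_false, iff_false, not_exists]
      rintro σ ⟨⟨hpsd, htr⟩, hx⟩
      exact (not_nonempty_iff.mpr hd) (aux_nonempty_of_trace_one htr)
    rw [holevoCap, h1, h2]
  · obtain ⟨i₀⟩ := hd
    set S₂ : Set ℝ := {x : ℝ | ∃ σ : Mat d, IsState σ ∧
        x = entropy (ptrace₁ (U * σ * Uᴴ)) - Ef (U * σ * Uᴴ)} with hS₂
    set B := Real.log (Fintype.card d₂) with hB
    -- upper bound on capVals
    have hcap_bdd : ∀ x ∈ capVals T, x ≤ B := by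
      rintro x ⟨m, p, v, hp, hp1, hv, rfl⟩
      set σ : Mat d := ∑ i, (p i : ℂ) • pureState (v i) with hσdef
      have hσ : IsState σ := isState_ensemble hp hp1 hv
      have hρ : IsState (U * σ * Uᴴ) := isState_conj hσ hU
      have havg : ∑ i, (p i : ℂ) • T (pureState (v i)) = ptrace₁ (U * σ * Uᴴ) := by
        rw [hσdef, Matrix.mul_sum, Matrix.sum_mul, ptrace₁_sum]
        refine Finset.sum_congr rfl fun i _ => ?_
        rw [hT, ← ptrace₁_smul]
        congr 1
        rw [Matrix.mul_smul, Matrix.smul_mul]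
      have h1 : entropy (∑ i, (p i : ℂ) • T (pureState (v i))) ≤ B := by
        rw [havg]
        exact entropy_le_log (posSemidef_ptrace₁ hρ.1) (by rw [trace_ptrace₁, hρ.2])
      have h2 : 0 ≤ ∑ i, p i * entropy (T (pureState (v i))) := by
        refine Finset.sum_nonneg fun i _ => mul_nonneg (hp i) ?_
        rw [hT, mul_pureState_mul]
        refine entropy_nonneg (posSemidef_ptrace₁ (posSemidef_pureState _)) ?_
        rw [trace_ptrace₁, trace_pureState]
        have hun := unitVec_mulVec hU (hv i)
        unfold UnitVec at hun
        rw [hun]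
        simp
      linarith
    -- upper bound on S₂
    have hrhs_bdd : ∀ x ∈ S₂, x ≤ B := by
      rintro x ⟨σ, hσ, rfl⟩
      have hρ := isState_conj hσ hU
      have h1 : entropy (ptrace₁ (U * σ * Uᴴ)) ≤ B :=
        entropy_le_log (posSemidef_ptrace₁ hρ.1) (by rw [trace_ptrace₁, hρ.2])
      have h2 := Ef_nonneg (U * σ * Uᴴ)
      linarith
    have hcap_ne : (capVals T).Nonempty :=
      ⟨_, 1, fun _ => (1 : ℝ), fun _ => Pi.single i₀ 1, fun _ => zero_le_one, by simp,
        fun _ => unitVec_single i₀, rfl⟩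
    have hrhs_ne : S₂.Nonempty := by
      refine ⟨_, pureState (Pi.single i₀ 1), ⟨posSemidef_pureState _, ?_⟩, rfl⟩
      rw [trace_pureState]
      have h0 := unitVec_single (n := d) i₀
      unfold UnitVec at h0
      rw [h0]
      simp
    rw [holevoCap]
    apply le_antisymm
    · refine csSup_le hcap_ne ?_
      rintro x ⟨m, p, v, hp, hp1, hv, rfl⟩
      set σ : Mat d := ∑ i, (p i : ℂ) • pureState (v i) with hσdef
      have hσ : IsState σ := isState_ensemble hp hp1 hv
      have hρdec : U * σ * Uᴴ = ∑ i, (p i : ℂ) • pureState (U *ᵥ v i) := by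
        rw [hσdef, Matrix.mul_sum, Matrix.sum_mul]
        refine Finset.sum_congr rfl fun i _ => ?_
        rw [Matrix.mul_smul, Matrix.smul_mul, mul_pureState_mul]
      have havg : ∑ i, (p i : ℂ) • T (pureState (v i)) = ptrace₁ (U * σ * Uᴴ) := by
        rw [hρdec, ptrace₁_sum]
        refine Finset.sum_congr rfl fun i _ => ?_
        rw [hT, mul_pureState_mul, ptrace₁_smul]
      have hef : Ef (U * σ * Uᴴ) ≤ ∑ i, p i * entropy (T (pureState (v i))) := by
        have hmem : (∑ i, p i * pureEnt (U *ᵥ v i)) ∈ efVals (U * σ * Uᴴ) :=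
          ⟨m, p, fun i => U *ᵥ v i, hp, fun i => unitVec_mulVec hU (hv i), hρdec, rfl⟩
        have hbdd : BddBelow (efVals (U * σ * Uᴴ)) := ⟨0, fun y hy => efVals_nonneg y hy⟩
        have hle : Ef (U * σ * Uᴴ) ≤ ∑ i, p i * pureEnt (U *ᵥ v i) := csInf_le hbdd hmem
        refine le_trans hle (le_of_eq ?_)
        refine Finset.sum_congr rfl fun i _ => ?_
        rw [pureEnt_eq_entropy_ptrace₁, hT, mul_pureState_mul]
      have hy : (entropy (ptrace₁ (U * σ * Uᴴ)) - Ef (U * σ * Uᴴ)) ∈ S₂ := ⟨σ, hσ, rfl⟩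
      have hle2 : entropy (∑ i, (p i : ℂ) • T (pureState (v i)))
          - ∑ i, p i * entropy (T (pureState (v i)))
          ≤ entropy (ptrace₁ (U * σ * Uᴴ)) - Ef (U * σ * Uᴴ) := by
        rw [havg]
        linarith
      exact le_trans hle2 (le_csSup ⟨B, fun z hz => hrhs_bdd z hz⟩ hy)
    · refine csSup_le hrhs_ne ?_
      rintro y ⟨σ, hσ, rfl⟩
      set ρ : Mat (d₁ × d₂) := U * σ * Uᴴ with hρdef
      have hρ : IsState ρ := isState_conj hσ hU
      have hne : (efVals ρ).Nonempty := by
        obtain ⟨q, w, hq, hw, hdecomp, -⟩ := aux_spectral_decomp hρ.1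
        set e := (Fintype.equivFin (d₁ × d₂)).symm with he
        refine ⟨∑ i, (q (e i)) * pureEnt (w (e i)), Fintype.card (d₁ × d₂),
          fun i => q (e i), fun i => w (e i), fun i => hq _, fun i => hw _, ?_, rfl⟩
        rw [hdecomp]
        exact (Fintype.sum_equiv e _ _ fun i => rfl).symm
      refine le_of_forall_pos_le_add fun ε hε => ?_
      obtain ⟨eVal, heVal, hlt⟩ := Real.lt_sInf_add_pos hne hε
      obtain ⟨m, p, w, hp, hw, hdec, rfl⟩ := heVal
      have htr1 : ∑ i, p i = 1 := by
        have h1 : ρ.trace = 1 := hρ.2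
        rw [hdec, Matrix.trace_sum] at h1
        have h2 : ∀ i : Fin m, ((p i : ℂ) • pureState (w i)).trace = (p i : ℂ) := by
          intro i
          rw [Matrix.trace_smul, trace_pureState, smul_eq_mul]
          have h3 := hw i
          unfold UnitVec at h3
          rw [h3]
          simp
        rw [Finset.sum_congr rfl fun i _ => h2 i] at h1
        exact_mod_cast h1
      set u : Fin m → (d → ℂ) :=
        fun i => if p i = 0 then Pi.single i₀ 1 else Uᴴ *ᵥ w i with hudef
      have hUu : ∀ i, p i ≠ 0 → U *ᵥ u i = w i := by
        intro i hpi
        rw [hudef]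
        simp only [if_neg hpi]
        exact aux_support hU hp hdec hpi
      have hu_unit : ∀ i, UnitVec (u i) := by
        intro i
        by_cases hpi : p i = 0
        · rw [hudef]
          simp only [if_pos hpi]
          exact unitVec_single i₀
        · refine unitVec_of_mulVec hU ?_
          rw [hUu i hpi]
          exact hw i
      have hsum1 : ∑ i, (p i : ℂ) • T (pureState (u i)) = ptrace₁ ρ := by
        have hrw : ρ = ∑ i, (p i : ℂ) • pureState (U *ᵥ u i) := by
          rw [hdec]
          refine Finset.sum_congr rfl fun i _ => ?_
          by_cases hpi : p i = 0
          · rw [hpi]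
            simp
          · rw [hUu i hpi]
        rw [hrw, ptrace₁_sum]
        refine Finset.sum_congr rfl fun i _ => ?_
        rw [hT, mul_pureState_mul, ptrace₁_smul]
      have hsum2 : ∑ i, p i * entropy (T (pureState (u i))) = ∑ i, p i * pureEnt (w i) := by
        refine Finset.sum_congr rfl fun i _ => ?_
        by_cases hpi : p i = 0
        · rw [hpi]
          ring
        · congr 1
          rw [hT, mul_pureState_mul, hUu i hpi, ← pureEnt_eq_entropy_ptrace₁]
      have hmem : (entropy (∑ i, (p i : ℂ) • T (pureState (u i)))
          - ∑ i, p i * entropy (T (pureState (u i)))) ∈ capVals T :=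
        ⟨m, p, u, hp, htr1, hu_unit, rfl⟩
      have hle := le_csSup ⟨B, fun z hz => hcap_bdd z hz⟩ hmem
      rw [hsum1, hsum2] at hle
      have hlt' : ∑ i, p i * pureEnt (w i) < Ef ρ + ε := hlt
      linarith
end
end

section
/- The partial transpose ρ_T^Γ of ρ_T = (|ψ_T⟩⟨ψ_T| + |ψ_T^⊥⟩⟨ψ_T^⊥|)/2 decomposes (after a suitable permutation of basis vectors) into a direct sum of two 4×4 Hermitian matrices having the same characteristic polynomial, namely f(2z) = 0 where f(z) = z⁴ − z³ + 4(p₀p_xp_y + p₀p_xp_z + p₀p_yp_z + p_xp_yp_z)z − 16 p₀p_xp_yp_z. -/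
open scoped Matrix Kronecker ComplexOrder
open Matrix

noncomputable section

/-- The state `|ψ_T⟩` in `ℂ² ⊗ ℂ⁴`. -/
def psiT (p₀ px py pz : ℝ) : Fin 2 × Fin 4 → ℂ := fun x =>
  if x = ((0 : Fin 2), (0 : Fin 4)) then (Real.sqrt p₀ : ℂ)
  else if x = ((1 : Fin 2), (1 : Fin 4)) then (Real.sqrt px : ℂ)
  else if x = ((1 : Fin 2), (2 : Fin 4)) then Complex.I * (Real.sqrt py : ℂ)
  else if x = ((0 : Fin 2), (3 : Fin 4)) then (Real.sqrt pz : ℂ)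
  else 0

/-- The state `|ψ_T^⊥⟩` in `ℂ² ⊗ ℂ⁴`. -/
def psiTperp (p₀ px py pz : ℝ) : Fin 2 × Fin 4 → ℂ := fun x =>
  if x = ((1 : Fin 2), (0 : Fin 4)) then (Real.sqrt p₀ : ℂ)
  else if x = ((0 : Fin 2), (1 : Fin 4)) then (Real.sqrt px : ℂ)
  else if x = ((0 : Fin 2), (2 : Fin 4)) then -(Complex.I * (Real.sqrt py : ℂ))
  else if x = ((1 : Fin 2), (3 : Fin 4)) then -(Real.sqrt pz : ℂ)
  else 0

/-- Trace norm of a Hermitian matrix: the sum of the absolute values of its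
eigenvalues (junk value 0 otherwise). -/
def traceNorm {d : Type} [Fintype d] [DecidableEq d] (M : Mat d) : ℝ :=
  if h : M.IsHermitian then ∑ i, |h.eigenvalues i| else 0

/-- Partial transpose on the first tensor factor. -/
def ptranspose₁ {d₁ d₂ : Type} [Fintype d₁] [Fintype d₂] (ρ : Mat (d₁ × d₂)) :
    Mat (d₁ × d₂) :=
  Matrix.of fun a b => ρ (b.1, a.2) (a.1, b.2)


section Aux
open Polynomial

lemma det_fin_four {R : Type*} [CommRing R] (M : Matrix (Fin 4) (Fin 4) R) :
    M.det =
      M 0 0 * (M 1 1 * (M 2 2 * M 3 3 - M 2 3 * M 3 2) - M 1 2 * (M 2 1 * M 3 3 - M 2 3 * M 3 1) + M 1 3 * (M 2 1 * M 3 2 - M 2 2 * M 3 1))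
    - M 0 1 * (M 1 0 * (M 2 2 * M 3 3 - M 2 3 * M 3 2) - M 1 2 * (M 2 0 * M 3 3 - M 2 3 * M 3 0) + M 1 3 * (M 2 0 * M 3 2 - M 2 2 * M 3 0))
    + M 0 2 * (M 1 0 * (M 2 1 * M 3 3 - M 2 3 * M 3 1) - M 1 1 * (M 2 0 * M 3 3 - M 2 3 * M 3 0) + M 1 3 * (M 2 0 * M 3 1 - M 2 1 * M 3 0))
    - M 0 3 * (M 1 0 * (M 2 1 * M 3 2 - M 2 2 * M 3 1) - M 1 1 * (M 2 0 * M 3 2 - M 2 2 * M 3 0) + M 1 2 * (M 2 0 * M 3 1 - M 2 1 * M 3 0)) := by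
  rw [Matrix.det_succ_row_zero]
  simp [Fin.sum_univ_succ, Matrix.det_fin_three, Matrix.submatrix_apply, Fin.succ_zero_eq_one, show (Fin.succ 2 : Fin 4) = 3 from rfl, show ((1:Fin 4).succAbove 2) = 3 from rfl, show ((2:Fin 4).succAbove 2) = 3 from rfl, show ((3:Fin 4).succAbove 2) = 2 from rfl, show (Fin.castSucc 2 : Fin 4) = 2 from rfl]
  ring


def blkA (a b c d : ℝ) : Matrix (Fin 4) (Fin 4) ℂ :=
  (2:ℂ)⁻¹ • !![(a:ℂ)*a, (a:ℂ)*b, Complex.I*((a:ℂ)*c), (a:ℂ)*d;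
               (a:ℂ)*b, (b:ℂ)*b, -(Complex.I*((b:ℂ)*c)), -((b:ℂ)*d);
               -(Complex.I*((a:ℂ)*c)), Complex.I*((b:ℂ)*c), (c:ℂ)*c, Complex.I*((c:ℂ)*d);
               (a:ℂ)*d, -((b:ℂ)*d), -(Complex.I*((c:ℂ)*d)), (d:ℂ)*d]

lemma charA (a b c d : ℝ) : (blkA a b c d).charpoly =
    X^4 - C (((a:ℂ)^2+(b:ℂ)^2+(c:ℂ)^2+(d:ℂ)^2)/2) * X^3
      + C (((a:ℂ)^2*(b:ℂ)^2*(c:ℂ)^2+(a:ℂ)^2*(b:ℂ)^2*(d:ℂ)^2+(a:ℂ)^2*(c:ℂ)^2*(d:ℂ)^2+(b:ℂ)^2*(c:ℂ)^2*(d:ℂ)^2)/2) * X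
      - C ((a:ℂ)^2*(b:ℂ)^2*(c:ℂ)^2*(d:ℂ)^2) := by
  rw [Matrix.charpoly, det_fin_four]
  apply Polynomial.funext
  intro z
  simp (config := { decide := true }) only [charmatrix_apply, Matrix.diagonal_apply, blkA,
    Matrix.smul_apply, Matrix.cons_val', Matrix.cons_val_zero, Matrix.cons_val_one,
    Matrix.head_cons, Matrix.head_fin_const, Matrix.cons_val_fin_one, Matrix.empty_val',
    Matrix.cons_val_two, Matrix.cons_val_three, Matrix.tail_cons, Matrix.of_apply,
    eval_add, eval_sub, eval_mul, eval_pow, eval_X, eval_C, eval_neg, smul_eq_mul, if_true, if_false, eval_zero]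
  linear_combination ((3/4)*(a:ℂ)^2*(b:ℂ)^2*(c:ℂ)^2*(d:ℂ)^2 + (-1/2)*z*(b:ℂ)^2*(c:ℂ)^2*(d:ℂ)^2 + (-1/2)*z*(a:ℂ)^2*(c:ℂ)^2*(d:ℂ)^2 + (-1/2)*z*(a:ℂ)^2*(b:ℂ)^2*(c:ℂ)^2 + (1/4)*z^2*(c:ℂ)^2*(d:ℂ)^2 + (1/4)*z^2*(b:ℂ)^2*(c:ℂ)^2 + (1/4)*z^2*(a:ℂ)^2*(c:ℂ)^2) * Complex.I_sq

def blkB (a b c d : ℝ) : Matrix (Fin 4) (Fin 4) ℂ :=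
  (2:ℂ)⁻¹ • !![(a:ℂ)*a, (a:ℂ)*b, -(Complex.I*((a:ℂ)*c)), -((a:ℂ)*d);
               (a:ℂ)*b, (b:ℂ)*b, Complex.I*((b:ℂ)*c), (b:ℂ)*d;
               Complex.I*((a:ℂ)*c), -(Complex.I*((b:ℂ)*c)), (c:ℂ)*c, Complex.I*((c:ℂ)*d);
               -((a:ℂ)*d), (b:ℂ)*d, -(Complex.I*((c:ℂ)*d)), (d:ℂ)*d]

lemma charB (a b c d : ℝ) : (blkB a b c d).charpoly =
    X^4 - C (((a:ℂ)^2+(b:ℂ)^2+(c:ℂ)^2+(d:ℂ)^2)/2) * X^3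
      + C (((a:ℂ)^2*(b:ℂ)^2*(c:ℂ)^2+(a:ℂ)^2*(b:ℂ)^2*(d:ℂ)^2+(a:ℂ)^2*(c:ℂ)^2*(d:ℂ)^2+(b:ℂ)^2*(c:ℂ)^2*(d:ℂ)^2)/2) * X
      - C ((a:ℂ)^2*(b:ℂ)^2*(c:ℂ)^2*(d:ℂ)^2) := by
  rw [Matrix.charpoly, det_fin_four]
  apply Polynomial.funext
  intro z
  simp (config := { decide := true }) only [charmatrix_apply, Matrix.diagonal_apply, blkB,
    Matrix.smul_apply, Matrix.cons_val', Matrix.cons_val_zero, Matrix.cons_val_one,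
    Matrix.head_cons, Matrix.head_fin_const, Matrix.cons_val_fin_one, Matrix.empty_val',
    Matrix.cons_val_two, Matrix.cons_val_three, Matrix.tail_cons, Matrix.of_apply,
    eval_add, eval_sub, eval_mul, eval_pow, eval_X, eval_C, eval_neg, smul_eq_mul, if_true, if_false, eval_zero]
  linear_combination ((3/4)*(a:ℂ)^2*(b:ℂ)^2*(c:ℂ)^2*(d:ℂ)^2 + (-1/2)*z*(b:ℂ)^2*(c:ℂ)^2*(d:ℂ)^2 + (-1/2)*z*(a:ℂ)^2*(c:ℂ)^2*(d:ℂ)^2 + (-1/2)*z*(a:ℂ)^2*(b:ℂ)^2*(c:ℂ)^2 + (1/4)*z^2*(c:ℂ)^2*(d:ℂ)^2 + (1/4)*z^2*(b:ℂ)^2*(c:ℂ)^2 + (1/4)*z^2*(a:ℂ)^2*(c:ℂ)^2) * Complex.I_sq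

def perm8 : (Fin 2 × Fin 4) ≃ (Fin 4 ⊕ Fin 4) where
  toFun x := ![![Sum.inl 0, Sum.inr 1, Sum.inr 2, Sum.inl 3],
               ![Sum.inr 0, Sum.inl 1, Sum.inl 2, Sum.inr 3]] x.1 x.2
  invFun s := Sum.elim ![((0:Fin 2),(0:Fin 4)), (1,1), (1,2), (0,3)]
                       ![((1:Fin 2),(0:Fin 4)), (0,1), (0,2), (1,3)] s
  left_inv := by decide
  right_inv := by decide

end Aux


lemma hermA (a b c d : ℝ) : (blkA a b c d).IsHermitian := by
  rw [Matrix.IsHermitian]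
  ext i j
  fin_cases i <;> fin_cases j <;>
    simp [blkA, Matrix.conjTranspose_apply, Complex.star_def, _root_.map_mul, Complex.conj_I,
      Complex.conj_ofReal, Matrix.smul_apply, smul_eq_mul]

lemma hermB (a b c d : ℝ) : (blkB a b c d).IsHermitian := by
  rw [Matrix.IsHermitian]
  ext i j
  fin_cases i <;> fin_cases j <;>
    simp [blkB, Matrix.conjTranspose_apply, Complex.star_def, _root_.map_mul, Complex.conj_I,
      Complex.conj_ofReal, Matrix.smul_apply, smul_eq_mul]

set_option maxRecDepth 8000 in
set_option maxHeartbeats 2000000 in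
lemma blockEq (p₀ px py pz : ℝ) :
    (Matrix.reindex perm8 perm8) (ptranspose₁ ((2 : ℂ)⁻¹ •
        (pureState (psiT p₀ px py pz) + pureState (psiTperp p₀ px py pz))))
      = Matrix.fromBlocks (blkA (Real.sqrt p₀) (Real.sqrt px) (Real.sqrt py) (Real.sqrt pz)) 0 0
          (blkB (Real.sqrt p₀) (Real.sqrt px) (Real.sqrt py) (Real.sqrt pz)) := by
  ext i j
  rcases i with i | i <;> rcases j with j | j <;> fin_cases i <;> fin_cases j <;>
    simp (config := { decide := true })
      [Matrix.reindex_apply, Matrix.submatrix_apply, perm8, Equiv.coe_fn_symm_mk,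
       ptranspose₁, pureState, psiT, psiTperp, blkA, blkB, Matrix.vecMulVec_apply,
       Prod.ext_iff, Matrix.smul_apply, Pi.star_apply, Complex.star_def, _root_.map_mul,
       Complex.conj_I, Complex.conj_ofReal, Complex.I_mul_I, smul_eq_mul] <;>
    (try ring) <;> (simp [Complex.I_sq]; try ring)

open Polynomial in
theorem stmt19
    (p₀ px py pz : ℝ)
    (h0 : 0 ≤ p₀) (hx : 0 ≤ px) (hy : 0 ≤ py) (hz : 0 ≤ pz)
    (hsum : p₀ + px + py + pz = 1) :
    ∃ (e : (Fin 2 × Fin 4) ≃ (Fin 4 ⊕ Fin 4)) (A B : Matrix (Fin 4) (Fin 4) ℂ),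
      (Matrix.reindex e e) (ptranspose₁ ((2 : ℂ)⁻¹ •
          (pureState (psiT p₀ px py pz) + pureState (psiTperp p₀ px py pz))))
        = Matrix.fromBlocks A 0 0 B ∧
      A.IsHermitian ∧ B.IsHermitian ∧
      A.charpoly = B.charpoly ∧
      (X ^ 4 - X ^ 3
          + C ((4 * (p₀ * px * py + p₀ * px * pz + p₀ * py * pz + px * py * pz) : ℝ) : ℂ) * X
          - C ((16 * (p₀ * px * py * pz) : ℝ) : ℂ)).comp (C 2 * X)
        = C (16 : ℂ) * A.charpoly := by
  have ha : ((Real.sqrt p₀ : ℝ) : ℂ)^2 = (p₀ : ℂ) := by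
    rw [← Complex.ofReal_pow, Real.sq_sqrt h0]
  have hb : ((Real.sqrt px : ℝ) : ℂ)^2 = (px : ℂ) := by
    rw [← Complex.ofReal_pow, Real.sq_sqrt hx]
  have hc : ((Real.sqrt py : ℝ) : ℂ)^2 = (py : ℂ) := by
    rw [← Complex.ofReal_pow, Real.sq_sqrt hy]
  have hd : ((Real.sqrt pz : ℝ) : ℂ)^2 = (pz : ℂ) := by
    rw [← Complex.ofReal_pow, Real.sq_sqrt hz]
  have hs : ((Real.sqrt p₀ : ℝ) : ℂ)^2 + ((Real.sqrt px : ℝ) : ℂ)^2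
      + ((Real.sqrt py : ℝ) : ℂ)^2 + ((Real.sqrt pz : ℝ) : ℂ)^2 = 1 := by
    rw [ha, hb, hc, hd]; exact_mod_cast hsum
  refine ⟨perm8, blkA (Real.sqrt p₀) (Real.sqrt px) (Real.sqrt py) (Real.sqrt pz),
    blkB (Real.sqrt p₀) (Real.sqrt px) (Real.sqrt py) (Real.sqrt pz),
    blockEq p₀ px py pz, hermA _ _ _ _, hermB _ _ _ _, by rw [charA, charB], ?_⟩
  rw [charA]
  apply Polynomial.funext
  intro z
  simp only [eval_comp, eval_mul, eval_add, eval_sub, eval_pow, eval_X, eval_C]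
  rw [ha, hb, hc, hd]
  have hsum' : (p₀:ℂ) + px + py + pz = 1 := by exact_mod_cast hsum
  push_cast
  linear_combination (8*z^3) * hsum'
end
end
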